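/- Let q ≥ 5 and let λ ∈ (0,1] satisfy λ > 1 − q/7. Then every boundary pair X satisfies ν(X) ≤ (1−λ)/(q − 4(1−λ)) < 1/3. -/
import Mathlib


namespace PottsBP

/-- Vertices of the integer lattice ℤ². -/
abbrev V : Type := ℤ × ℤ

/-- Lattice adjacency on ℤ². -/
def Adj (x y : V) : Prop := (x.1 - y.1).natAbs + (x.2 - y.2).natAbs = 1

/-- `(u, v)` is a boundary edge of `R`, oriented with `u` outside `R` and `v` inside. -/
def IsBdryEdge (R : Finset V) (u v : V) : Prop := u ∉ R ∧ v ∈ R ∧ Adj u v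

/-- Configurations on region `R` with spins `{1,…,q}`, extended by `0` off `R`. -/
def Configs (q : ℕ) (R : Finset V) : Set (V → ℕ) :=
  {σ | (∀ v ∈ R, 1 ≤ σ v ∧ σ v ≤ q) ∧ ∀ v ∉ R, σ v = 0}

/-- A boundary pair: a nonempty finite region `R`, a distinguished boundary edge
`s = (w, f)` with `f ∈ R`, and a pair `(B, B')` of boundary configurations (maps from
boundary edges, represented by their (outside, inside) endpoint pairs, to `{0,…,q}`,
with `0` denoting a free edge) that differ only on `s`, assign spins from `{1,…,q}`
to `s`, and such that any two perpendicular boundary edges sharing their outside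
endpoint get the same spin in at least one of `B`, `B'`. -/
structure BoundaryPair (q : ℕ) where
  R : Finset V
  w : V
  f : V
  hw : w ∉ R
  hf : f ∈ R
  hadj : Adj w f
  B : V × V → ℕ
  B' : V × V → ℕ
  hBrange : ∀ u v, IsBdryEdge R u v → B (u, v) ≤ q
  hB'range : ∀ u v, IsBdryEdge R u v → B' (u, v) ≤ q
  hagree : ∀ u v, IsBdryEdge R u v → (u, v) ≠ (w, f) → B (u, v) = B' (u, v)
  hBs : 1 ≤ B (w, f) ∧ B (w, f) ≤ q
  hB's : 1 ≤ B' (w, f) ∧ B' (w, f) ≤ q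
  hperp : ∀ u v₁ v₂, IsBdryEdge R u v₁ → IsBdryEdge R u v₂ →
    (v₁.1 - u.1) * (v₂.1 - u.1) + (v₁.2 - u.2) * (v₂.2 - u.2) = 0 →
    B (u, v₁) = B (u, v₂) ∨ B' (u, v₁) = B' (u, v₂)

variable {q : ℕ}

/-- The number of monochromatic internal edges of `R` under `σ`. -/
noncomputable def monInt (R : Finset V) (σ : V → ℕ) : ℕ :=
  Set.ncard {e : Sym2 V | ∃ x y : V, e = s(x, y) ∧ Adj x y ∧ x ∈ R ∧ y ∈ R ∧ σ x = σ y}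

/-- `mon_σ(E(R_X) − {s_X})` for the boundary pair `X`: the number of monochromatic
edges, excluding the distinguished edge `s_X`, where a boundary edge is monochromatic
if its spin under `B_X` is in `{1,…,q}` and equals the spin `σ` gives its inner
endpoint. -/
noncomputable def monExS (X : BoundaryPair q) (σ : V → ℕ) : ℕ :=
  monInt X.R σ + Set.ncard {p : V × V | IsBdryEdge X.R p.1 p.2 ∧ p ≠ (X.w, X.f) ∧
    1 ≤ X.B p ∧ X.B p = σ p.2}

/-- `mon_σ(E(R_X))` with respect to an arbitrary boundary configuration `Bc`. -/
noncomputable def monFull (X : BoundaryPair q) (Bc : V × V → ℕ) (σ : V → ℕ) : ℕ :=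
  monInt X.R σ + Set.ncard {p : V × V | IsBdryEdge X.R p.1 p.2 ∧
    1 ≤ Bc p ∧ Bc p = σ p.2}

/-- `c_i`: the total weight (ignoring the edge `s_X`) of the configurations that
assign spin `i` to `f_X`. -/
noncomputable def ci (X : BoundaryPair q) (lam : ℝ) (i : ℕ) : ℝ :=
  ∑ᶠ σ ∈ {σ ∈ Configs q X.R | σ X.f = i}, lam ^ monExS X σ

/-- `c = Σ_{i ∉ C} c_i` where `C = {B_X(s_X), B'_X(s_X)}`. -/
noncomputable def cOut (X : BoundaryPair q) (lam : ℝ) : ℝ :=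
  ∑ i ∈ (Finset.Icc 1 q).filter
      (fun i => i ≠ X.B (X.w, X.f) ∧ i ≠ X.B' (X.w, X.f)), ci X lam i

/-- `μ(X) = max_{i ∈ C} (1−λ)c_i / ((1+λ)c_i + c)`. -/
noncomputable def mu (X : BoundaryPair q) (lam : ℝ) : ℝ :=
  max ((1 - lam) * ci X lam (X.B (X.w, X.f)) /
        ((1 + lam) * ci X lam (X.B (X.w, X.f)) + cOut X lam))
      ((1 - lam) * ci X lam (X.B' (X.w, X.f)) /
        ((1 + lam) * ci X lam (X.B' (X.w, X.f)) + cOut X lam))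

/-- The partition function of `X` with boundary configuration `Bc`. -/
noncomputable def Zbp (X : BoundaryPair q) (lam : ℝ) (Bc : V × V → ℕ) : ℝ :=
  ∑ᶠ σ ∈ Configs q X.R, lam ^ monFull X Bc σ

/-- The Gibbs distribution `π_{Bc}` on configurations of `R_X`. -/
noncomputable def gibbsbp (X : BoundaryPair q) (lam : ℝ) (Bc : V × V → ℕ)
    (σ : V → ℕ) : ℝ :=
  lam ^ monFull X Bc σ / Zbp X lam Bc

/-- `ψ` is a coupling of `π_{B_X}` and `π_{B'_X}`. -/
def IsCoupling (X : BoundaryPair q) (lam : ℝ)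
    (ψ : (V → ℕ) × (V → ℕ) → ℝ) : Prop :=
  (∀ p, 0 ≤ ψ p) ∧
  (∀ p : (V → ℕ) × (V → ℕ),
    (p.1 ∉ Configs q X.R ∨ p.2 ∉ Configs q X.R) → ψ p = 0) ∧
  (∀ σ ∈ Configs q X.R, (∑ᶠ σ' ∈ Configs q X.R, ψ (σ, σ')) = gibbsbp X lam X.B σ) ∧
  (∀ σ' ∈ Configs q X.R, (∑ᶠ σ ∈ Configs q X.R, ψ (σ, σ')) = gibbsbp X lam X.B' σ')

/-- The probability that a pair drawn from `ψ` disagrees at `f_X`. -/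
noncomputable def disagree (X : BoundaryPair q)
    (ψ : (V → ℕ) × (V → ℕ) → ℝ) : ℝ :=
  ∑ᶠ p ∈ {p : (V → ℕ) × (V → ℕ) | p.1 X.f ≠ p.2 X.f}, ψ p

/-- `ν(X)`: the minimum, over couplings `ψ` of `π_{B_X}` and `π_{B'_X}`, of the
probability that a pair drawn from `ψ` disagrees at `f_X`. -/
noncomputable def nu (X : BoundaryPair q) (lam : ℝ) : ℝ :=
  sInf {r : ℝ | ∃ ψ, IsCoupling X lam ψ ∧ r = disagree X ψ}

section Work

open Function Finset

variable {q : ℕ}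

/-! ### basic geometry -/

/-- the four neighbors of a vertex -/
def nbrF (v : V) : Finset V := {(v.1+1, v.2), (v.1-1, v.2), (v.1, v.2+1), (v.1, v.2-1)}

lemma mem_nbrF_of_adj {x y : V} (h : Adj y x) : y ∈ nbrF x := by
  obtain ⟨x1, x2⟩ := x; obtain ⟨y1, y2⟩ := y
  simp only [Adj] at h
  simp only [nbrF, Finset.mem_insert, Finset.mem_singleton, Prod.mk.injEq]
  omega

lemma adj_symm {x y : V} (h : Adj x y) : Adj y x := by
  simp only [Adj] at *; omega

lemma adj_irrefl (x : V) : ¬ Adj x x := by simp [Adj]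

lemma nbrF_card_le (v : V) : (nbrF v).card ≤ 4 := by
  simp only [nbrF]
  apply le_trans (Finset.card_insert_le _ _)
  have := Finset.card_insert_le ((v.1-1, v.2) : V) ({(v.1, v.2+1), (v.1, v.2-1)} : Finset V)
  have := Finset.card_insert_le ((v.1, v.2+1) : V) ({(v.1, v.2-1)} : Finset V)
  have : ({(v.1, v.2-1)} : Finset V).card = 1 := Finset.card_singleton _
  omega

lemma finite_configs (q : ℕ) (R : Finset V) : (Configs q R).Finite := by
  classical
  have : ((fun σ : V → ℕ => (fun v : R => (⟨min (σ v) q, by omega⟩ : Fin (q+1)))) ''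
      Configs q R).Finite := Set.toFinite _
  apply Set.Finite.of_finite_image this
  rintro σ hσ τ hτ h
  funext v
  by_cases hv : v ∈ R
  · have h1 := congrFun h ⟨v, hv⟩
    simp only [Fin.mk.injEq] at h1
    have := hσ.1 v hv; have := hτ.1 v hv
    omega
  · rw [hσ.2 v hv, hτ.2 v hv]

/-! ### the sets counted by `monInt`, `monExS`, `monFull` -/

def intSet (R : Finset V) (σ : V → ℕ) : Set (Sym2 V) :=
  {e : Sym2 V | ∃ x y : V, e = s(x, y) ∧ Adj x y ∧ x ∈ R ∧ y ∈ R ∧ σ x = σ y}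

def bSet (X : BoundaryPair q) (σ : V → ℕ) : Set (V × V) :=
  {p : V × V | IsBdryEdge X.R p.1 p.2 ∧ p ≠ (X.w, X.f) ∧ 1 ≤ X.B p ∧ X.B p = σ p.2}

def fSet (X : BoundaryPair q) (Bc : V × V → ℕ) (σ : V → ℕ) : Set (V × V) :=
  {p : V × V | IsBdryEdge X.R p.1 p.2 ∧ 1 ≤ Bc p ∧ Bc p = σ p.2}

lemma monInt_eq (R : Finset V) (σ : V → ℕ) : monInt R σ = (intSet R σ).ncard := rfl
lemma monExS_eq (X : BoundaryPair q) (σ : V → ℕ) :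
    monExS X σ = monInt X.R σ + (bSet X σ).ncard := rfl
lemma monFull_eq (X : BoundaryPair q) (Bc : V × V → ℕ) (σ : V → ℕ) :
    monFull X Bc σ = monInt X.R σ + (fSet X Bc σ).ncard := rfl

lemma finite_intSet (R : Finset V) (σ : V → ℕ) : (intSet R σ).Finite := by
  apply Set.Finite.subset (Set.Finite.image (fun p : V × V => s(p.1, p.2))
    (R ×ˢ R).finite_toSet)
  rintro e ⟨x, y, rfl, -, hx, hy, -⟩
  exact ⟨(x, y), by simp [hx, hy], rfl⟩

def bdryPairs (R : Finset V) : Finset (V × V) :=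
  R.biUnion fun v => (nbrF v).image fun u => (u, v)

lemma mem_bdryPairs {R : Finset V} {u v : V} (h : IsBdryEdge R u v) :
    (u, v) ∈ bdryPairs R := by
  simp only [bdryPairs, Finset.mem_biUnion, Finset.mem_image]
  exact ⟨v, h.2.1, u, mem_nbrF_of_adj h.2.2, rfl⟩

lemma finite_bSet (X : BoundaryPair q) (σ : V → ℕ) : (bSet X σ).Finite := by
  apply Set.Finite.subset (bdryPairs X.R).finite_toSet
  rintro ⟨u, v⟩ h
  exact mem_bdryPairs h.1

lemma finite_fSet (X : BoundaryPair q) (Bc : V × V → ℕ) (σ : V → ℕ) :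
    (fSet X Bc σ).Finite := by
  apply Set.Finite.subset (bdryPairs X.R).finite_toSet
  rintro ⟨u, v⟩ h
  exact mem_bdryPairs h.1

end Work
section Work2
open Function Finset
variable {q : ℕ}

lemma fSet_eq (X : BoundaryPair q) (σ : V → ℕ) {Bc : V × V → ℕ}
    (hag : ∀ u v, IsBdryEdge X.R u v → (u, v) ≠ (X.w, X.f) → Bc (u, v) = X.B (u, v))
    (hs1 : 1 ≤ Bc (X.w, X.f)) :
    fSet X Bc σ = if Bc (X.w, X.f) = σ X.f
      then insert (X.w, X.f) (bSet X σ) else bSet X σ := by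
  split_ifs with h
  · ext ⟨u, v⟩
    simp only [fSet, bSet, Set.mem_setOf_eq, Set.mem_insert_iff]
    constructor
    · rintro ⟨hb, h1, h2⟩
      by_cases hp : (u, v) = (X.w, X.f)
      · exact Or.inl hp
      · exact Or.inr ⟨hb, hp, by rw [← hag u v hb hp]; exact ⟨h1, h2⟩⟩
    · rintro (hp | ⟨hb, hp, h1, h2⟩)
      · rw [Prod.mk.injEq] at hp
        obtain ⟨rfl, rfl⟩ := hp
        exact ⟨⟨X.hw, X.hf, X.hadj⟩, hs1, h⟩
      · exact ⟨hb, by rw [hag u v hb hp]; exact ⟨h1, h2⟩⟩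
  · ext ⟨u, v⟩
    simp only [fSet, bSet, Set.mem_setOf_eq]
    constructor
    · rintro ⟨hb, h1, h2⟩
      have hp : (u, v) ≠ (X.w, X.f) := by
        intro hp
        rw [Prod.mk.injEq] at hp
        obtain ⟨rfl, rfl⟩ := hp
        exact h h2
      exact ⟨hb, hp, by rw [← hag u v hb hp]; exact ⟨h1, h2⟩⟩
    · rintro ⟨hb, hp, h1, h2⟩
      exact ⟨hb, by rw [hag u v hb hp]; exact ⟨h1, h2⟩⟩

lemma wf_notMem_bSet (X : BoundaryPair q) (σ : V → ℕ) : (X.w, X.f) ∉ bSet X σ := by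
  rintro ⟨-, hne, -⟩; exact hne rfl

lemma monFull_eq_monExS (X : BoundaryPair q) (σ : V → ℕ) {Bc : V × V → ℕ}
    (hag : ∀ u v, IsBdryEdge X.R u v → (u, v) ≠ (X.w, X.f) → Bc (u, v) = X.B (u, v))
    (hs1 : 1 ≤ Bc (X.w, X.f)) :
    monFull X Bc σ = monExS X σ + (if Bc (X.w, X.f) = σ X.f then 1 else 0) := by
  rw [monFull_eq, monExS_eq, add_assoc, fSet_eq X σ hag hs1]
  congr 1
  split_ifs with h
  · rw [Set.ncard_insert_of_notMem (wf_notMem_bSet X σ) (finite_bSet X σ)]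
  · rw [add_zero]

lemma monFull_B_eq (X : BoundaryPair q) (σ : V → ℕ) :
    monFull X X.B σ = monExS X σ + (if X.B (X.w, X.f) = σ X.f then 1 else 0) :=
  monFull_eq_monExS X σ (fun _ _ _ _ => rfl) X.hBs.1

lemma monFull_B'_eq (X : BoundaryPair q) (σ : V → ℕ) :
    monFull X X.B' σ = monExS X σ + (if X.B' (X.w, X.f) = σ X.f then 1 else 0) :=
  monFull_eq_monExS X σ (fun u v h hp => (X.hagree u v h hp).symm) X.hB's.1

end Work2
section Work3
open Function Finset
variable {q : ℕ}

def nIn (X : BoundaryPair q) (σ : V → ℕ) (t : ℕ) : Finset V :=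
  ((nbrF X.f).erase X.w).filter fun y => y ∈ X.R ∧ σ y = t

def nOut (X : BoundaryPair q) (t : ℕ) : Finset V :=
  ((nbrF X.f).erase X.w).filter fun u => u ∉ X.R ∧ X.B (u, X.f) = t

lemma intSet_upd_zero {X : BoundaryPair q} {σ : V → ℕ} (hσ : σ ∈ Configs q X.R) :
    intSet X.R (update σ X.f 0) ⊆ intSet X.R σ := by
  rintro e ⟨x, y, rfl, hadj, hx, hy, hc⟩
  by_cases hxf : x = X.f
  · subst hxf
    by_cases hyf : y = X.f
    · exact absurd (hyf ▸ hadj) (adj_irrefl _)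
    · rw [update_self, update_of_ne hyf] at hc
      have := (hσ.1 y hy).1; omega
  · by_cases hyf : y = X.f
    · subst hyf
      rw [update_self, update_of_ne hxf] at hc
      have := (hσ.1 x hx).1; omega
    · rw [update_of_ne hxf, update_of_ne hyf] at hc
      exact ⟨x, y, rfl, hadj, hx, hy, hc⟩

lemma bSet_upd_zero {X : BoundaryPair q} {σ : V → ℕ} :
    bSet X (update σ X.f 0) ⊆ bSet X σ := by
  rintro ⟨u, v⟩ ⟨hb, hp, h1, h2⟩
  by_cases hvf : v = X.f
  · subst hvf
    rw [update_self] at h2; omega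
  · rw [update_of_ne hvf] at h2
    exact ⟨hb, hp, h1, h2⟩

lemma intSet_upd_subset (X : BoundaryPair q) (σ : V → ℕ) (t : ℕ) :
    intSet X.R (update σ X.f t) ⊆
      intSet X.R (update σ X.f 0) ∪ (fun y => s(X.f, y)) '' ↑(nIn X σ t) := by
  rintro e ⟨x, y, rfl, hadj, hx, hy, hc⟩
  by_cases hxf : x = X.f
  · subst hxf
    by_cases hyf : y = X.f
    · exact absurd (hyf ▸ hadj) (adj_irrefl _)
    · right
      rw [update_self, update_of_ne hyf] at hc
      refine ⟨y, ?_, rfl⟩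
      simp only [nIn, Finset.coe_filter, Set.mem_setOf_eq, Finset.mem_erase]
      exact ⟨⟨fun hyw => X.hw (hyw ▸ hy), mem_nbrF_of_adj (adj_symm hadj)⟩, hy, hc.symm⟩
  · by_cases hyf : y = X.f
    · subst hyf
      right
      rw [update_self, update_of_ne hxf] at hc
      refine ⟨x, ?_, Sym2.eq_swap⟩
      simp only [nIn, Finset.coe_filter, Set.mem_setOf_eq, Finset.mem_erase]
      exact ⟨⟨fun hxw => X.hw (hxw ▸ hx), mem_nbrF_of_adj hadj⟩, hx, hc⟩
    · left
      rw [update_of_ne hxf, update_of_ne hyf] at hc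
      refine ⟨x, y, rfl, hadj, hx, hy, ?_⟩
      rw [update_of_ne hxf, update_of_ne hyf]
      exact hc

lemma bSet_upd_subset (X : BoundaryPair q) (σ : V → ℕ) (t : ℕ) :
    bSet X (update σ X.f t) ⊆
      bSet X (update σ X.f 0) ∪ (fun u => (u, X.f)) '' ↑(nOut X t) := by
  rintro ⟨u, v⟩ ⟨hb, hp, h1, h2⟩
  by_cases hvf : v = X.f
  · subst hvf
    right
    rw [update_self] at h2
    refine ⟨u, ?_, rfl⟩
    have huw : u ≠ X.w := by
      intro h; exact hp (by rw [h])
    simp only [nOut, Finset.coe_filter, Set.mem_setOf_eq, Finset.mem_erase]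
    exact ⟨⟨huw, mem_nbrF_of_adj hb.2.2⟩, hb.1, h2⟩
  · left
    rw [update_of_ne hvf] at h2
    refine ⟨hb, hp, h1, ?_⟩
    rw [update_of_ne hvf]
    exact h2

lemma monExS_upd_zero_le {X : BoundaryPair q} {σ : V → ℕ} (hσ : σ ∈ Configs q X.R) :
    monExS X (update σ X.f 0) ≤ monExS X σ := by
  rw [monExS_eq, monExS_eq, monInt_eq, monInt_eq]
  exact Nat.add_le_add
    (Set.ncard_le_ncard (intSet_upd_zero hσ) (finite_intSet _ _))
    (Set.ncard_le_ncard bSet_upd_zero (finite_bSet _ _))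

lemma monExS_upd_le (X : BoundaryPair q) (σ : V → ℕ) (t : ℕ) :
    monExS X (update σ X.f t) ≤
      monExS X (update σ X.f 0) + ((nIn X σ t).card + (nOut X t).card) := by
  rw [monExS_eq, monExS_eq, monInt_eq, monInt_eq]
  have s1 : (intSet X.R (update σ X.f t)).ncard ≤
      (intSet X.R (update σ X.f 0) ∪ (fun y => s(X.f, y)) '' ↑(nIn X σ t)).ncard :=
    Set.ncard_le_ncard (intSet_upd_subset X σ t)
      ((finite_intSet _ _).union ((nIn X σ t).finite_toSet.image _))
  have s2 := Set.ncard_union_le (intSet X.R (update σ X.f 0))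
    ((fun y => s(X.f, y)) '' ↑(nIn X σ t))
  have s3 : ((fun y => s(X.f, y)) '' (↑(nIn X σ t) : Set V)).ncard ≤ (nIn X σ t).card := by
    rw [← Set.ncard_coe_finset (nIn X σ t)]
    exact Set.ncard_image_le (nIn X σ t).finite_toSet
  have u1 : (bSet X (update σ X.f t)).ncard ≤
      (bSet X (update σ X.f 0) ∪ (fun u => (u, X.f)) '' ↑(nOut X t)).ncard :=
    Set.ncard_le_ncard (bSet_upd_subset X σ t)
      ((finite_bSet _ _).union ((nOut X t).finite_toSet.image _))
  have u2 := Set.ncard_union_le (bSet X (update σ X.f 0)) ((fun u => (u, X.f)) '' ↑(nOut X t))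
  have u3 : ((fun u => (u, X.f)) '' (↑(nOut X t) : Set V)).ncard ≤ (nOut X t).card := by
    rw [← Set.ncard_coe_finset (nOut X t)]
    exact Set.ncard_image_le (nOut X t).finite_toSet
  omega

lemma sum_counts_le (X : BoundaryPair q) (σ : V → ℕ) :
    ∑ t ∈ Finset.Icc 1 q, ((nIn X σ t).card + (nOut X t).card) ≤ 3 := by
  classical
  have hg : ∀ t, (nIn X σ t).card + (nOut X t).card =
      (((nbrF X.f).erase X.w).filter fun y =>
        (y ∈ X.R ∧ σ y = t) ∨ (y ∉ X.R ∧ X.B (y, X.f) = t)).card := by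
    intro t
    rw [Finset.filter_or]
    rw [Finset.card_union_of_disjoint]
    · rfl
    · simp only [Finset.disjoint_filter]
      rintro y - ⟨hy, -⟩ ⟨hy', -⟩
      exact hy' hy
  simp only [hg]
  rw [← Finset.card_biUnion]
  · apply le_trans (Finset.card_le_card (Finset.biUnion_subset.2 fun t _ => Finset.filter_subset _ _))
    have hw : X.w ∈ nbrF X.f := mem_nbrF_of_adj X.hadj
    rw [Finset.card_erase_of_mem hw]
    have := nbrF_card_le X.f
    omega
  · intro t₁ ht₁ t₂ ht₂ hne
    simp only [Finset.disjoint_filter]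
    rintro y hy (⟨hm1, h1⟩ | ⟨hm1, h1⟩) (⟨hm2, h2⟩ | ⟨hm2, h2⟩) <;> first
      | exact hne (h1 ▸ h2 ▸ rfl)
      | exact hm2 hm1
      | exact hm1 hm2

end Work3
section Work4
open Function Finset
variable {q : ℕ}

noncomputable def CF (q : ℕ) (R : Finset V) : Finset (V → ℕ) := (finite_configs q R).toFinset

lemma mem_CF {R : Finset V} {σ : V → ℕ} : σ ∈ CF q R ↔ σ ∈ Configs q R :=
  Set.Finite.mem_toFinset _

lemma coe_CF (R : Finset V) : (↑(CF q R) : Set (V → ℕ)) = Configs q R :=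
  Set.Finite.coe_toFinset _

lemma ci_eq (X : BoundaryPair q) (lam : ℝ) (i : ℕ) :
    ci X lam i = ∑ σ ∈ (CF q X.R).filter (fun σ => σ X.f = i), lam ^ monExS X σ := by
  rw [ci, ← finsum_mem_coe_finset]
  congr 1
  ext σ
  simp only [Finset.coe_filter, Set.mem_setOf_eq, mem_CF, Set.mem_setOf_eq]

lemma Zbp_eq_sum (X : BoundaryPair q) (lam : ℝ) (Bc : V × V → ℕ) :
    Zbp X lam Bc = ∑ σ ∈ CF q X.R, lam ^ monFull X Bc σ := by
  rw [Zbp, ← coe_CF X.R, finsum_mem_coe_finset]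

lemma configs_update {R : Finset V} {σ : V → ℕ} (hσ : σ ∈ Configs q R) {f : V}
    (hf : f ∈ R) {j : ℕ} (hj1 : 1 ≤ j) (hj2 : j ≤ q) :
    update σ f j ∈ Configs q R := by
  constructor
  · intro v hv
    by_cases hvf : v = f
    · subst hvf; rw [update_self]; exact ⟨hj1, hj2⟩
    · rw [update_of_ne hvf]; exact hσ.1 v hv
  · intro v hv
    have hvf : v ≠ f := fun h => hv (h ▸ hf)
    rw [update_of_ne hvf]; exact hσ.2 v hv

lemma const_mem_configs (R : Finset V) {i : ℕ} (hi1 : 1 ≤ i) (hi2 : i ≤ q) :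
    (fun v => if v ∈ R then i else 0) ∈ Configs q R := by
  constructor
  · intro v hv; simp [hv]; omega
  · intro v hv; simp [hv]

lemma ci_pos (X : BoundaryPair q) {lam : ℝ} (hlam0 : 0 < lam) {i : ℕ}
    (hi1 : 1 ≤ i) (hi2 : i ≤ q) : 0 < ci X lam i := by
  classical
  rw [ci_eq]
  apply Finset.sum_pos (fun σ _ => pow_pos hlam0 _)
  refine ⟨fun v => if v ∈ X.R then i else 0, ?_⟩
  simp only [Finset.mem_filter, mem_CF]
  exact ⟨const_mem_configs X.R hi1 hi2, by simp [X.hf]⟩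

lemma bernoulli_pow {lam : ℝ} (hlam0 : 0 < lam) (n : ℕ) :
    1 - (n : ℝ) * (1 - lam) ≤ lam ^ n := by
  have h := one_add_mul_le_pow (a := lam - 1) (by linarith) n
  have : (1 : ℝ) + (lam - 1) = lam := by ring
  rw [this] at h
  linarith

lemma per_sigma (X : BoundaryPair q) {lam : ℝ} (hlam0 : 0 < lam) (hlam1 : lam ≤ 1)
    {σ : V → ℕ} (hσ : σ ∈ Configs q X.R) (h3 : 3 * (1 - lam) ≤ (q : ℝ)) :
    ((q : ℝ) - 3 * (1 - lam)) * lam ^ monExS X σ ≤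
      ∑ t ∈ Finset.Icc 1 q, lam ^ monExS X (update σ X.f t) := by
  set base := monExS X (update σ X.f 0) with hbase
  have hstep : ∀ t ∈ Finset.Icc 1 q,
      lam ^ base * (1 - ((nIn X σ t).card + ((nOut X t).card) : ℝ) * (1 - lam)) ≤
        lam ^ monExS X (update σ X.f t) := by
    intro t _
    have h1 : lam ^ (base + ((nIn X σ t).card + (nOut X t).card)) ≤
        lam ^ monExS X (update σ X.f t) :=
      pow_le_pow_of_le_one hlam0.le hlam1 (monExS_upd_le X σ t)
    rw [pow_add] at h1
    refine le_trans ?_ h1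
    have hb := bernoulli_pow hlam0 ((nIn X σ t).card + (nOut X t).card)
    have : ((((nIn X σ t).card + (nOut X t).card) : ℕ) : ℝ) =
        (((nIn X σ t).card : ℝ) + ((nOut X t).card : ℝ)) := by push_cast; ring
    rw [this] at hb
    have := pow_nonneg hlam0.le base
    nlinarith [hb]
  have hsum := Finset.sum_le_sum hstep
  refine le_trans ?_ hsum
  have hcnt := sum_counts_le X σ
  have hcntR : (∑ t ∈ Finset.Icc 1 q,
      (((nIn X σ t).card : ℝ) + ((nOut X t).card : ℝ))) ≤ 3 := by
    calc (∑ t ∈ Finset.Icc 1 q, (((nIn X σ t).card : ℝ) + ((nOut X t).card : ℝ)))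
        = ((∑ t ∈ Finset.Icc 1 q, ((nIn X σ t).card + (nOut X t).card) : ℕ) : ℝ) := by
          push_cast; ring
      _ ≤ 3 := by exact_mod_cast hcnt
  have hsum2 : ((q : ℝ) - 3 * (1 - lam)) ≤ ∑ t ∈ Finset.Icc 1 q,
      (1 - (((nIn X σ t).card : ℝ) + ((nOut X t).card : ℝ)) * (1 - lam)) := by
    rw [Finset.sum_sub_distrib, Finset.sum_const, Nat.card_Icc]
    simp only [add_tsub_cancel_right, nsmul_eq_mul, mul_one]
    rw [← Finset.sum_mul]
    have h1l : (0:ℝ) ≤ 1 - lam := by linarith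
    nlinarith [hcntR]
  have hpow : lam ^ monExS X σ ≤ lam ^ base :=
    pow_le_pow_of_le_one hlam0.le hlam1 (monExS_upd_zero_le hσ)
  calc ((q : ℝ) - 3 * (1 - lam)) * lam ^ monExS X σ
      ≤ ((q : ℝ) - 3 * (1 - lam)) * lam ^ base := by
        apply mul_le_mul_of_nonneg_left hpow; linarith
    _ ≤ (∑ t ∈ Finset.Icc 1 q,
          (1 - (((nIn X σ t).card : ℝ) + ((nOut X t).card : ℝ)) * (1 - lam))) * lam ^ base :=
        mul_le_mul_of_nonneg_right hsum2 (pow_nonneg hlam0.le base)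
    _ = ∑ t ∈ Finset.Icc 1 q, lam ^ base *
          (1 - (((nIn X σ t).card : ℝ) + ((nOut X t).card : ℝ)) * (1 - lam)) := by
        rw [Finset.sum_mul]; simp [mul_comm]

lemma sum_ci_ge (X : BoundaryPair q) {lam : ℝ} (hlam0 : 0 < lam) (hlam1 : lam ≤ 1)
    (h3 : 3 * (1 - lam) ≤ (q : ℝ)) {i : ℕ} (hi1 : 1 ≤ i) (hi2 : i ≤ q) :
    ((q : ℝ) - 3 * (1 - lam)) * ci X lam i ≤ ∑ j ∈ Finset.Icc 1 q, ci X lam j := by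
  classical
  have hfib : ∀ j ∈ Finset.Icc 1 q,
      ci X lam j = ∑ σ ∈ (CF q X.R).filter (fun σ => σ X.f = i),
        lam ^ monExS X (update σ X.f j) := by
    intro j hj
    rw [Finset.mem_Icc] at hj
    rw [ci_eq]
    refine Finset.sum_nbij' (fun σ => update σ X.f i) (fun σ => update σ X.f j)
      ?_ ?_ ?_ ?_ ?_
    · intro σ hσ
      simp only [Finset.mem_filter, mem_CF] at hσ ⊢
      exact ⟨configs_update hσ.1 X.hf hi1 hi2, update_self _ _ _⟩
    · intro σ hσ
      simp only [Finset.mem_filter, mem_CF] at hσ ⊢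
      exact ⟨configs_update hσ.1 X.hf hj.1 hj.2, update_self _ _ _⟩
    · intro σ hσ
      simp only [Finset.mem_filter, mem_CF] at hσ
      show update (update σ X.f i) X.f j = σ
      rw [update_idem, ← hσ.2, update_eq_self]
    · intro σ hσ
      simp only [Finset.mem_filter, mem_CF] at hσ
      show update (update σ X.f j) X.f i = σ
      rw [update_idem, ← hσ.2, update_eq_self]
    · intro σ hσ
      simp only [Finset.mem_filter, mem_CF] at hσ
      show lam ^ monExS X σ = lam ^ monExS X (update (update σ X.f i) X.f j)
      rw [update_idem, ← hσ.2, update_eq_self]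
  rw [Finset.sum_congr rfl hfib, Finset.sum_comm, ci_eq, Finset.mul_sum]
  apply Finset.sum_le_sum
  intro σ hσ
  simp only [Finset.mem_filter, mem_CF] at hσ
  exact per_sigma X hlam0 hlam1 hσ.1 h3

end Work4
section Work5
open Function Finset
variable {q : ℕ}

noncomputable def eB (X : BoundaryPair q) (lam : ℝ) (j : ℕ) : ℝ :=
  if X.B (X.w, X.f) = j then lam else 1

noncomputable def eB' (X : BoundaryPair q) (lam : ℝ) (j : ℕ) : ℝ :=
  if X.B' (X.w, X.f) = j then lam else 1

noncomputable def pB (X : BoundaryPair q) (lam : ℝ) (j : ℕ) : ℝ :=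
  eB X lam j * ci X lam j / Zbp X lam X.B

noncomputable def pB' (X : BoundaryPair q) (lam : ℝ) (j : ℕ) : ℝ :=
  eB' X lam j * ci X lam j / Zbp X lam X.B'

noncomputable def mmin (X : BoundaryPair q) (lam : ℝ) (j : ℕ) : ℝ :=
  min (pB X lam j) (pB' X lam j)

noncomputable def DD (X : BoundaryPair q) (lam : ℝ) : ℝ :=
  ∑ j ∈ Finset.Icc 1 q, (pB X lam j - mmin X lam j)

noncomputable def kap (X : BoundaryPair q) (lam : ℝ) (j j' : ℕ) : ℝ :=
  (if j = j' then mmin X lam j else 0) +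
    (pB X lam j - mmin X lam j) * (pB' X lam j' - mmin X lam j') / DD X lam

open scoped Classical in
noncomputable def psi (X : BoundaryPair q) (lam : ℝ) (p : (V → ℕ) × (V → ℕ)) : ℝ :=
  if p.1 ∈ Configs q X.R ∧ p.2 ∈ Configs q X.R then
    kap X lam (p.1 X.f) (p.2 X.f) * (lam ^ monExS X p.1 / ci X lam (p.1 X.f)) *
      (lam ^ monExS X p.2 / ci X lam (p.2 X.f))
  else 0

variable {X : BoundaryPair q} {lam : ℝ}

lemma CF_nonempty (hq : 1 ≤ q) : (CF q X.R).Nonempty :=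
  ⟨fun v => if v ∈ X.R then 1 else 0, mem_CF.2 (const_mem_configs X.R le_rfl hq)⟩

lemma Zbp_pos (hlam0 : 0 < lam) (hq : 1 ≤ q) (Bc : V × V → ℕ) : 0 < Zbp X lam Bc := by
  rw [Zbp_eq_sum]
  exact Finset.sum_pos (fun σ _ => pow_pos hlam0 _) (CF_nonempty hq)

lemma ci_nonneg (X : BoundaryPair q) (hlam0 : 0 < lam) (j : ℕ) : 0 ≤ ci X lam j := by
  rw [ci_eq]
  exact Finset.sum_nonneg fun σ _ => pow_nonneg hlam0.le _

lemma eB_nonneg (hlam0 : 0 < lam) (j : ℕ) : 0 ≤ eB X lam j := by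
  unfold eB; split_ifs <;> linarith

lemma eB'_nonneg (hlam0 : 0 < lam) (j : ℕ) : 0 ≤ eB' X lam j := by
  unfold eB'; split_ifs <;> linarith

lemma pB_nonneg (hlam0 : 0 < lam) (hq : 1 ≤ q) (j : ℕ) : 0 ≤ pB X lam j :=
  div_nonneg (mul_nonneg (eB_nonneg hlam0 j) (ci_nonneg X hlam0 j)) (Zbp_pos hlam0 hq _).le

lemma pB'_nonneg (hlam0 : 0 < lam) (hq : 1 ≤ q) (j : ℕ) : 0 ≤ pB' X lam j :=
  div_nonneg (mul_nonneg (eB'_nonneg hlam0 j) (ci_nonneg X hlam0 j)) (Zbp_pos hlam0 hq _).le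

lemma mmin_nonneg (hlam0 : 0 < lam) (hq : 1 ≤ q) (j : ℕ) : 0 ≤ mmin X lam j :=
  le_min (pB_nonneg hlam0 hq j) (pB'_nonneg hlam0 hq j)

lemma sub_mmin_nonneg (j : ℕ) : 0 ≤ pB X lam j - mmin X lam j :=
  sub_nonneg.2 (min_le_left _ _)

lemma sub_mmin'_nonneg (j : ℕ) : 0 ≤ pB' X lam j - mmin X lam j :=
  sub_nonneg.2 (min_le_right _ _)

lemma prod_sub_mmin_zero (j : ℕ) :
    (pB X lam j - mmin X lam j) * (pB' X lam j - mmin X lam j) = 0 := by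
  rcases min_cases (pB X lam j) (pB' X lam j) with ⟨h, -⟩ | ⟨h, -⟩ <;>
    simp [mmin, h, sub_self]

lemma DD_nonneg : 0 ≤ DD X lam :=
  Finset.sum_nonneg fun j _ => sub_mmin_nonneg j

/-- `Z_B = Σ_j e_j c_j`. -/
lemma Zbp_fiber (X : BoundaryPair q) (lam : ℝ) {Bc : V × V → ℕ} (e : ℕ → ℝ)
    (hBc : ∀ σ ∈ Configs q X.R, (lam : ℝ) ^ monFull X Bc σ = e (σ X.f) * lam ^ monExS X σ) :
    Zbp X lam Bc = ∑ j ∈ Finset.Icc 1 q, e j * ci X lam j := by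
  classical
  rw [Zbp_eq_sum]
  rw [← Finset.sum_fiberwise_of_maps_to (g := fun σ => σ X.f) (t := Finset.Icc 1 q) ?hmap]
  case hmap =>
    intro σ hσ
    rw [mem_CF] at hσ
    rw [Finset.mem_Icc]
    exact hσ.1 X.f X.hf
  apply Finset.sum_congr rfl
  intro j hj
  rw [ci_eq, Finset.mul_sum]
  apply Finset.sum_congr rfl
  intro σ hσ
  simp only [Finset.mem_filter, mem_CF] at hσ
  rw [hBc σ hσ.1, hσ.2]

lemma pow_monFull_B (X : BoundaryPair q) (lam : ℝ) (σ : V → ℕ) :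
    lam ^ monFull X X.B σ = eB X lam (σ X.f) * lam ^ monExS X σ := by
  rw [monFull_B_eq, pow_add, eB, mul_comm]
  congr 1
  split_ifs <;> simp

lemma pow_monFull_B' (X : BoundaryPair q) (lam : ℝ) (σ : V → ℕ) :
    lam ^ monFull X X.B' σ = eB' X lam (σ X.f) * lam ^ monExS X σ := by
  rw [monFull_B'_eq, pow_add, eB', mul_comm]
  congr 1
  split_ifs <;> simp

lemma ZB_eq (X : BoundaryPair q) (lam : ℝ) :
    Zbp X lam X.B = ∑ j ∈ Finset.Icc 1 q, eB X lam j * ci X lam j :=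
  Zbp_fiber X lam _ (fun σ _ => pow_monFull_B X lam σ)

lemma ZB'_eq (X : BoundaryPair q) (lam : ℝ) :
    Zbp X lam X.B' = ∑ j ∈ Finset.Icc 1 q, eB' X lam j * ci X lam j :=
  Zbp_fiber X lam _ (fun σ _ => pow_monFull_B' X lam σ)

lemma sum_pB (hlam0 : 0 < lam) (hq : 1 ≤ q) :
    ∑ j ∈ Finset.Icc 1 q, pB X lam j = 1 := by
  unfold pB
  rw [← Finset.sum_div, ← ZB_eq, div_self (Zbp_pos hlam0 hq _).ne']

lemma sum_pB' (hlam0 : 0 < lam) (hq : 1 ≤ q) :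
    ∑ j ∈ Finset.Icc 1 q, pB' X lam j = 1 := by
  unfold pB'
  rw [← Finset.sum_div, ← ZB'_eq, div_self (Zbp_pos hlam0 hq _).ne']

lemma DD_eq' (hlam0 : 0 < lam) (hq : 1 ≤ q) :
    DD X lam = ∑ j ∈ Finset.Icc 1 q, (pB' X lam j - mmin X lam j) := by
  unfold DD
  rw [Finset.sum_sub_distrib, Finset.sum_sub_distrib, sum_pB hlam0 hq, sum_pB' hlam0 hq]

lemma kap_nonneg (hlam0 : 0 < lam) (hq : 1 ≤ q) (j j' : ℕ) : 0 ≤ kap X lam j j' := by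
  unfold kap
  have h1 : (0:ℝ) ≤ (if j = j' then mmin X lam j else 0) := by
    split_ifs
    · exact mmin_nonneg hlam0 hq j
    · exact le_refl 0
  have h2 : (0:ℝ) ≤ (pB X lam j - mmin X lam j) * (pB' X lam j' - mmin X lam j') / DD X lam :=
    div_nonneg (mul_nonneg (sub_mmin_nonneg j) (sub_mmin'_nonneg j')) DD_nonneg
  linarith

lemma row_kap (hlam0 : 0 < lam) (hq : 1 ≤ q) {j : ℕ} (hj : j ∈ Finset.Icc 1 q) :
    ∑ j' ∈ Finset.Icc 1 q, kap X lam j j' = pB X lam j := by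
  unfold kap
  rw [Finset.sum_add_distrib, Finset.sum_ite_eq (Finset.Icc 1 q) j (fun _ => mmin X lam j),
    if_pos hj]
  have hrest : ∑ j' ∈ Finset.Icc 1 q,
      (pB X lam j - mmin X lam j) * (pB' X lam j' - mmin X lam j') / DD X lam
      = (pB X lam j - mmin X lam j) * DD X lam / DD X lam := by
    rw [← Finset.sum_div, ← Finset.mul_sum, ← DD_eq' hlam0 hq]
  rw [hrest]
  rcases eq_or_lt_of_le (DD_nonneg (X := X) (lam := lam)) with hD | hD
  · have hterm : pB X lam j - mmin X lam j = 0 := by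
      have := (Finset.sum_eq_zero_iff_of_nonneg
        (fun j' _ => sub_mmin_nonneg (X := X) (lam := lam) j')).1 hD.symm j hj
      exact this
    rw [hterm, zero_mul, zero_div, add_zero]
    linarith
  · rw [mul_div_assoc, div_self hD.ne', mul_one]; ring

lemma col_kap (hlam0 : 0 < lam) (hq : 1 ≤ q) {j' : ℕ} (hj' : j' ∈ Finset.Icc 1 q) :
    ∑ j ∈ Finset.Icc 1 q, kap X lam j j' = pB' X lam j' := by
  unfold kap
  rw [Finset.sum_add_distrib, Finset.sum_ite_eq' (Finset.Icc 1 q) j' (fun x => mmin X lam x),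
    if_pos hj']
  have hrest : ∑ j ∈ Finset.Icc 1 q,
      (pB X lam j - mmin X lam j) * (pB' X lam j' - mmin X lam j') / DD X lam
      = DD X lam * (pB' X lam j' - mmin X lam j') / DD X lam := by
    rw [← Finset.sum_div, ← Finset.sum_mul]
    rfl
  rw [hrest]
  rcases eq_or_lt_of_le (DD_nonneg (X := X) (lam := lam)) with hD | hD
  · have hterm : pB' X lam j' - mmin X lam j' = 0 := by
      have hD2 := DD_eq' (X := X) hlam0 hq ▸ hD
      exact (Finset.sum_eq_zero_iff_of_nonneg
        (fun j _ => sub_mmin'_nonneg (X := X) (lam := lam) j)).1 hD2.symm j' hj'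
    rw [hterm, mul_zero, zero_div, add_zero]
    linarith
  · rw [mul_comm, mul_div_assoc, div_self hD.ne', mul_one]
    have : mmin X lam j' + (pB' X lam j' - mmin X lam j') = pB' X lam j' := by ring
    rw [this]

lemma offdiag_kap (hlam0 : 0 < lam) (hq : 1 ≤ q) :
    ∑ z ∈ (Finset.Icc 1 q ×ˢ Finset.Icc 1 q).filter (fun z => z.1 ≠ z.2),
      kap X lam z.1 z.2 = DD X lam := by
  classical
  have htotal : ∑ z ∈ Finset.Icc 1 q ×ˢ Finset.Icc 1 q, kap X lam z.1 z.2 = 1 := by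
    rw [Finset.sum_product]
    rw [Finset.sum_congr rfl (fun j hj => row_kap hlam0 hq hj)]
    exact sum_pB hlam0 hq
  have hdiag : ∑ z ∈ (Finset.Icc 1 q ×ˢ Finset.Icc 1 q).filter (fun z => z.1 = z.2),
      kap X lam z.1 z.2 = ∑ j ∈ Finset.Icc 1 q, mmin X lam j := by
    rw [Finset.sum_nbij' (i := fun z => z.1) (j := fun j => (j, j))]
    · intro z hz
      simp only [Finset.mem_filter, Finset.mem_product] at hz
      exact hz.1.1
    · intro j hj
      simp [hj]
    · intro z hz
      simp only [Finset.mem_filter, Finset.mem_product] at hz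
      have : z = (z.1, z.2) := rfl
      rw [this, hz.2]
    · intro j hj; rfl
    · intro z hz
      simp only [Finset.mem_filter, Finset.mem_product] at hz
      show kap X lam z.1 z.2 = mmin X lam z.1
      rw [← hz.2]
      unfold kap
      rw [if_pos rfl, prod_sub_mmin_zero, zero_div, add_zero]
  have hsplit := Finset.sum_filter_add_sum_filter_not
    (Finset.Icc 1 q ×ˢ Finset.Icc 1 q) (fun z => z.1 = z.2) (fun z => kap X lam z.1 z.2)
  have hDD : DD X lam = 1 - ∑ j ∈ Finset.Icc 1 q, mmin X lam j := by
    unfold DD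
    rw [Finset.sum_sub_distrib, sum_pB hlam0 hq]
  have : (Finset.Icc 1 q ×ˢ Finset.Icc 1 q).filter (fun z => ¬ z.1 = z.2) =
      (Finset.Icc 1 q ×ˢ Finset.Icc 1 q).filter (fun z => z.1 ≠ z.2) := rfl
  rw [← this]
  linarith [hsplit, hdiag, htotal]

end Work5
section Work6
open Function Finset
variable {q : ℕ} {X : BoundaryPair q} {lam : ℝ}

lemma psi_nonneg (hlam0 : 0 < lam) (hq : 1 ≤ q) (p : (V → ℕ) × (V → ℕ)) :
    0 ≤ psi X lam p := by
  unfold psi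
  split_ifs with h
  · exact mul_nonneg (mul_nonneg (kap_nonneg hlam0 hq _ _)
      (div_nonneg (pow_nonneg hlam0.le _) (ci_nonneg X hlam0 _)))
      (div_nonneg (pow_nonneg hlam0.le _) (ci_nonneg X hlam0 _))
  · exact le_refl 0

lemma psi_zero (p : (V → ℕ) × (V → ℕ))
    (h : p.1 ∉ Configs q X.R ∨ p.2 ∉ Configs q X.R) : psi X lam p = 0 := by
  unfold psi
  rw [if_neg]
  rintro ⟨h1, h2⟩
  rcases h with h | h
  · exact h h1
  · exact h h2

lemma mem_Icc_of_configs {σ : V → ℕ} (hσ : σ ∈ Configs q X.R) :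
    σ X.f ∈ Finset.Icc 1 q := by
  rw [Finset.mem_Icc]; exact hσ.1 X.f X.hf

lemma fiber_w_div (hlam0 : 0 < lam) {j : ℕ} (hj : j ∈ Finset.Icc 1 q) :
    ∑ σ ∈ (CF q X.R).filter (fun σ => σ X.f = j),
      lam ^ monExS X σ / ci X lam j = 1 := by
  rw [Finset.mem_Icc] at hj
  rw [← Finset.sum_div, ← ci_eq, div_self (ci_pos X hlam0 hj.1 hj.2).ne']

lemma psi_eval {p : (V → ℕ) × (V → ℕ)} (h1 : p.1 ∈ Configs q X.R)
    (h2 : p.2 ∈ Configs q X.R) :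
    psi X lam p = kap X lam (p.1 X.f) (p.2 X.f) *
      (lam ^ monExS X p.1 / ci X lam (p.1 X.f)) *
      (lam ^ monExS X p.2 / ci X lam (p.2 X.f)) := by
  unfold psi
  rw [if_pos ⟨h1, h2⟩]

lemma marginal_fst (hlam0 : 0 < lam) (hq : 1 ≤ q) {σ : V → ℕ}
    (hσ : σ ∈ Configs q X.R) :
    (∑ᶠ σ' ∈ Configs q X.R, psi X lam (σ, σ')) = gibbsbp X lam X.B σ := by
  classical
  rw [← coe_CF X.R, finsum_mem_coe_finset]
  rw [← Finset.sum_fiberwise_of_maps_to (g := fun σ' => σ' X.f) (t := Finset.Icc 1 q)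
    (fun σ' hσ' => mem_Icc_of_configs (mem_CF.1 hσ'))]
  have hinner : ∀ j' ∈ Finset.Icc 1 q,
      ∑ σ' ∈ (CF q X.R).filter (fun σ' => σ' X.f = j'), psi X lam (σ, σ')
      = kap X lam (σ X.f) j' * (lam ^ monExS X σ / ci X lam (σ X.f)) := by
    intro j' hj'
    have : ∀ σ' ∈ (CF q X.R).filter (fun σ' => σ' X.f = j'), psi X lam (σ, σ') =
        kap X lam (σ X.f) j' * (lam ^ monExS X σ / ci X lam (σ X.f)) *
          (lam ^ monExS X σ' / ci X lam j') := by
      intro σ' hσ'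
      simp only [Finset.mem_filter, mem_CF] at hσ'
      rw [psi_eval hσ hσ'.1]
      simp only [hσ'.2]
    rw [Finset.sum_congr rfl this, ← Finset.mul_sum, fiber_w_div hlam0 hj', mul_one]
  rw [Finset.sum_congr rfl hinner, ← Finset.sum_mul, row_kap hlam0 hq (mem_Icc_of_configs hσ)]
  unfold gibbsbp pB
  rw [pow_monFull_B]
  have hc : ci X lam (σ X.f) ≠ 0 := by
    have hm := mem_Icc_of_configs hσ
    rw [Finset.mem_Icc] at hm
    exact (ci_pos X hlam0 hm.1 hm.2).ne'
  rw [div_mul_div_comm,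
    show eB X lam (σ X.f) * ci X lam (σ X.f) * lam ^ monExS X σ =
      eB X lam (σ X.f) * lam ^ monExS X σ * ci X lam (σ X.f) by ring,
    mul_div_mul_right _ _ hc]

lemma marginal_snd (hlam0 : 0 < lam) (hq : 1 ≤ q) {σ' : V → ℕ}
    (hσ' : σ' ∈ Configs q X.R) :
    (∑ᶠ σ ∈ Configs q X.R, psi X lam (σ, σ')) = gibbsbp X lam X.B' σ' := by
  classical
  rw [← coe_CF X.R, finsum_mem_coe_finset]
  rw [← Finset.sum_fiberwise_of_maps_to (g := fun σ => σ X.f) (t := Finset.Icc 1 q)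
    (fun σ hσ => mem_Icc_of_configs (mem_CF.1 hσ))]
  have hinner : ∀ j ∈ Finset.Icc 1 q,
      ∑ σ ∈ (CF q X.R).filter (fun σ => σ X.f = j), psi X lam (σ, σ')
      = kap X lam j (σ' X.f) * (lam ^ monExS X σ' / ci X lam (σ' X.f)) := by
    intro j hj
    have : ∀ σ ∈ (CF q X.R).filter (fun σ => σ X.f = j), psi X lam (σ, σ') =
        (lam ^ monExS X σ / ci X lam j) *
          (kap X lam j (σ' X.f) * (lam ^ monExS X σ' / ci X lam (σ' X.f))) := by
      intro σ hσ
      simp only [Finset.mem_filter, mem_CF] at hσ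
      rw [psi_eval hσ.1 hσ']
      simp only [hσ.2]
      ring
    rw [Finset.sum_congr rfl this, ← Finset.sum_mul, fiber_w_div hlam0 hj, one_mul]
  rw [Finset.sum_congr rfl hinner, ← Finset.sum_mul, col_kap hlam0 hq (mem_Icc_of_configs hσ')]
  unfold gibbsbp pB'
  rw [pow_monFull_B']
  have hc : ci X lam (σ' X.f) ≠ 0 := by
    have hm := mem_Icc_of_configs hσ'
    rw [Finset.mem_Icc] at hm
    exact (ci_pos X hlam0 hm.1 hm.2).ne'
  rw [div_mul_div_comm,
    show eB' X lam (σ' X.f) * ci X lam (σ' X.f) * lam ^ monExS X σ' =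
      eB' X lam (σ' X.f) * lam ^ monExS X σ' * ci X lam (σ' X.f) by ring,
    mul_div_mul_right _ _ hc]

lemma psi_isCoupling (hlam0 : 0 < lam) (hq : 1 ≤ q) :
    IsCoupling X lam (psi X lam) :=
  ⟨psi_nonneg hlam0 hq, psi_zero,
   fun σ hσ => marginal_fst hlam0 hq hσ,
   fun σ' hσ' => marginal_snd hlam0 hq hσ'⟩

lemma support_psi :
    Function.support (psi X lam) ⊆ ↑(CF q X.R ×ˢ CF q X.R) := by
  intro p hp
  simp only [Function.mem_support] at hp
  by_contra hmem
  apply hp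
  apply psi_zero
  rw [Finset.mem_coe, Finset.mem_product] at hmem
  push_neg at hmem
  by_cases h1 : p.1 ∈ Configs q X.R
  · exact Or.inr (fun h2 => (hmem (mem_CF.2 h1)) (mem_CF.2 h2))
  · exact Or.inl h1

lemma disagree_le_DD (hlam0 : 0 < lam) (hq : 1 ≤ q) :
    disagree X (psi X lam) ≤ DD X lam := by
  classical
  unfold disagree
  have hfin : ({p : (V → ℕ) × (V → ℕ) | p.1 X.f ≠ p.2 X.f} ∩
      Function.support (psi X lam)).Finite :=
    Set.Finite.subset (CF q X.R ×ˢ CF q X.R).finite_toSet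
      (Set.inter_subset_right.trans support_psi)
  rw [finsum_mem_eq_sum (psi X lam) hfin]
  set T := (CF q X.R ×ˢ CF q X.R).filter (fun p => p.1 X.f ≠ p.2 X.f) with hT
  have hsub : hfin.toFinset ⊆ T := by
    intro p hp
    rw [Set.Finite.mem_toFinset] at hp
    obtain ⟨hp1, hp2⟩ := hp
    have := support_psi hp2
    simp only [Finset.mem_coe] at this
    rw [hT, Finset.mem_filter]
    exact ⟨this, hp1⟩
  have h1 : ∑ p ∈ hfin.toFinset, psi X lam p ≤ ∑ p ∈ T, psi X lam p :=
    Finset.sum_le_sum_of_subset_of_nonneg hsub (fun p _ _ => psi_nonneg hlam0 hq p)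
  refine le_trans h1 ?_
  -- compute the T sum
  have hmap : ∀ p ∈ T, (p.1 X.f, p.2 X.f) ∈
      (Finset.Icc 1 q ×ˢ Finset.Icc 1 q).filter (fun z => z.1 ≠ z.2) := by
    intro p hp
    rw [hT, Finset.mem_filter, Finset.mem_product] at hp
    rw [Finset.mem_filter, Finset.mem_product]
    exact ⟨⟨mem_Icc_of_configs (mem_CF.1 hp.1.1), mem_Icc_of_configs (mem_CF.1 hp.1.2)⟩, hp.2⟩
  rw [← Finset.sum_fiberwise_of_maps_to (g := fun p => (p.1 X.f, p.2 X.f)) hmap]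
  have hinner : ∀ z ∈ (Finset.Icc 1 q ×ˢ Finset.Icc 1 q).filter (fun z => z.1 ≠ z.2),
      ∑ p ∈ T.filter (fun p => (p.1 X.f, p.2 X.f) = z), psi X lam p = kap X lam z.1 z.2 := by
    rintro ⟨z1, z2⟩ hz
    rw [Finset.mem_filter, Finset.mem_product] at hz
    have hTz : T.filter (fun p => (p.1 X.f, p.2 X.f) = (z1, z2)) =
        ((CF q X.R).filter (fun σ => σ X.f = z1)) ×ˢ
          ((CF q X.R).filter (fun σ => σ X.f = z2)) := by
      ext p
      simp only [hT, Finset.mem_filter, Finset.mem_product, Prod.mk.injEq]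
      constructor
      · rintro ⟨⟨⟨hp1, hp2⟩, -⟩, he1, he2⟩
        exact ⟨⟨hp1, he1⟩, hp2, he2⟩
      · rintro ⟨⟨hp1, he1⟩, hp2, he2⟩
        refine ⟨⟨⟨hp1, hp2⟩, ?_⟩, he1, he2⟩
        rw [he1, he2]; exact hz.2
    rw [hTz]
    have heval : ∀ p ∈ ((CF q X.R).filter (fun σ => σ X.f = z1)) ×ˢ
        ((CF q X.R).filter (fun σ => σ X.f = z2)), psi X lam p =
          (kap X lam z1 z2 * (lam ^ monExS X p.1 / ci X lam z1)) *
            (lam ^ monExS X p.2 / ci X lam z2) := by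
      rintro ⟨σ, σ'⟩ hp
      simp only [Finset.mem_product, Finset.mem_filter, mem_CF] at hp
      rw [psi_eval hp.1.1 hp.2.1]
      simp only [hp.1.2, hp.2.2]
    rw [Finset.sum_congr rfl heval, Finset.sum_product]
    have : ∀ σ ∈ (CF q X.R).filter (fun σ => σ X.f = z1),
        (∑ σ' ∈ (CF q X.R).filter (fun σ => σ X.f = z2),
          (kap X lam z1 z2 * (lam ^ monExS X σ / ci X lam z1)) *
            (lam ^ monExS X σ' / ci X lam z2)) =
        kap X lam z1 z2 * (lam ^ monExS X σ / ci X lam z1) := by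
      intro σ hσ
      rw [← Finset.mul_sum, fiber_w_div hlam0 hz.1.2, mul_one]
    rw [Finset.sum_congr rfl this, ← Finset.mul_sum, fiber_w_div hlam0 hz.1.1, mul_one]
  rw [Finset.sum_congr rfl hinner]
  exact le_of_eq (offdiag_kap hlam0 hq)

lemma nu_le_DD (hlam0 : 0 < lam) (hq : 1 ≤ q) : nu X lam ≤ DD X lam := by
  have hmem : disagree X (psi X lam) ∈
      {r : ℝ | ∃ ψ, IsCoupling X lam ψ ∧ r = disagree X ψ} :=
    ⟨psi X lam, psi_isCoupling hlam0 hq, rfl⟩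
  have hbdd : BddBelow {r : ℝ | ∃ ψ, IsCoupling X lam ψ ∧ r = disagree X ψ} := by
    refine ⟨0, ?_⟩
    rintro r ⟨ψ, hc, rfl⟩
    unfold disagree
    rw [finsum_mem_def]
    exact finsum_nonneg (Set.indicator_nonneg (fun p _ => hc.1 p))
  exact le_trans (csInf_le hbdd hmem) (disagree_le_DD hlam0 hq)

end Work6
section Work7
open Function Finset
variable {q : ℕ} {X : BoundaryPair q} {lam : ℝ}

lemma sum_ite_eq_Icc {k : ℕ} (hk : k ∈ Finset.Icc 1 q) (g : ℕ → ℝ) :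
    ∑ j ∈ Finset.Icc 1 q, (if j = k then g j else 0) = g k := by
  rw [Finset.sum_ite_eq' (Finset.Icc 1 q) k g, if_pos hk]

lemma S_sub_ZB (X : BoundaryPair q) (lam : ℝ) (hi0 : X.B (X.w, X.f) ∈ Finset.Icc 1 q) :
    (∑ j ∈ Finset.Icc 1 q, ci X lam j) - Zbp X lam X.B =
      (1 - lam) * ci X lam (X.B (X.w, X.f)) := by
  rw [ZB_eq, ← Finset.sum_sub_distrib,
    ← sum_ite_eq_Icc hi0 (fun j => (1 - lam) * ci X lam j)]
  apply Finset.sum_congr rfl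
  intro j hj
  rcases eq_or_ne j (X.B (X.w, X.f)) with h0 | h0
  · simp only [eB, h0]
    simp
    ring
  · simp only [eB, if_neg (Ne.symm h0 : X.B (X.w, X.f) ≠ j), if_neg h0]
    ring

lemma S_sub_ZB' (X : BoundaryPair q) (lam : ℝ) (hi1 : X.B' (X.w, X.f) ∈ Finset.Icc 1 q) :
    (∑ j ∈ Finset.Icc 1 q, ci X lam j) - Zbp X lam X.B' =
      (1 - lam) * ci X lam (X.B' (X.w, X.f)) := by
  rw [ZB'_eq, ← Finset.sum_sub_distrib,
    ← sum_ite_eq_Icc hi1 (fun j => (1 - lam) * ci X lam j)]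
  apply Finset.sum_congr rfl
  intro j hj
  rcases eq_or_ne j (X.B' (X.w, X.f)) with h0 | h0
  · simp only [eB', h0]
    simp
    ring
  · simp only [eB', if_neg (Ne.symm h0 : X.B' (X.w, X.f) ≠ j), if_neg h0]
    ring

lemma S_sub_W (X : BoundaryPair q) (lam : ℝ) (hlam1 : lam ≤ 1)
    (hi0 : X.B (X.w, X.f) ∈ Finset.Icc 1 q) (hi1 : X.B' (X.w, X.f) ∈ Finset.Icc 1 q)
    (hC : X.B (X.w, X.f) ≠ X.B' (X.w, X.f)) :
    (∑ j ∈ Finset.Icc 1 q, ci X lam j) -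
      (∑ j ∈ Finset.Icc 1 q, min (eB X lam j) (eB' X lam j) * ci X lam j) =
      (1 - lam) * ci X lam (X.B (X.w, X.f)) + (1 - lam) * ci X lam (X.B' (X.w, X.f)) := by
  rw [← Finset.sum_sub_distrib]
  have hcong : ∀ j ∈ Finset.Icc 1 q,
      ci X lam j - min (eB X lam j) (eB' X lam j) * ci X lam j =
      (if j = X.B (X.w, X.f) then (1 - lam) * ci X lam j else 0) +
      (if j = X.B' (X.w, X.f) then (1 - lam) * ci X lam j else 0) := by
    intro j hj
    rcases eq_or_ne j (X.B (X.w, X.f)) with h0 | h0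
    · have h1 : X.B' (X.w, X.f) ≠ X.B (X.w, X.f) := fun hh => hC hh.symm
      simp only [eB, eB', h0]
      simp [h1, hC]
      rw [min_eq_left hlam1]
      ring
    · simp only [eB, eB', if_neg (Ne.symm h0 : X.B (X.w, X.f) ≠ j), if_neg h0]
      rcases eq_or_ne j (X.B' (X.w, X.f)) with h1 | h1
      · simp only [h1]
        simp [hC]
        rw [min_comm, min_eq_left hlam1]
        ring
      · simp only [if_neg (Ne.symm h1 : X.B' (X.w, X.f) ≠ j), if_neg h1, min_self]
        ring
  rw [Finset.sum_congr rfl hcong, Finset.sum_add_distrib,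
    sum_ite_eq_Icc hi0 (fun j => (1 - lam) * ci X lam j),
    sum_ite_eq_Icc hi1 (fun j => (1 - lam) * ci X lam j)]

set_option maxHeartbeats 2000000 in
lemma DD_le_bound (hq : 5 ≤ q) (hlam0 : 0 < lam) (hlam1 : lam ≤ 1)
    (hlam : 1 - (q : ℝ) / 7 < lam) :
    DD X lam ≤ (1 - lam) / ((q : ℝ) - 4 * (1 - lam)) := by
  classical
  have hq1 : 1 ≤ q := by omega
  have hqR : (5 : ℝ) ≤ (q : ℝ) := by exact_mod_cast hq
  have hden : 0 < (q : ℝ) - 4 * (1 - lam) := by linarith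
  have hbound0 : 0 ≤ (1 - lam) / ((q : ℝ) - 4 * (1 - lam)) :=
    div_nonneg (by linarith) hden.le
  have hi0 : X.B (X.w, X.f) ∈ Finset.Icc 1 q := Finset.mem_Icc.2 X.hBs
  have hi1 : X.B' (X.w, X.f) ∈ Finset.Icc 1 q := Finset.mem_Icc.2 X.hB's
  by_cases hC : X.B (X.w, X.f) = X.B' (X.w, X.f)
  · -- identical boundary conditions: DD = 0
    have heq : eB X lam = eB' X lam := by
      funext j; unfold eB eB'; rw [hC]
    have hZeq : Zbp X lam X.B = Zbp X lam X.B' := by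
      rw [ZB_eq, ZB'_eq, heq]
    have hp : ∀ j, pB X lam j = pB' X lam j := by
      intro j; unfold pB pB'; rw [heq, hZeq]
    have : DD X lam = 0 := by
      unfold DD
      apply Finset.sum_eq_zero
      intro j hj
      rw [mmin, ← hp j, min_self, sub_self]
    rw [this]; exact hbound0
  · -- main case
    set a := ci X lam (X.B (X.w, X.f)) with ha_def
    set b := ci X lam (X.B' (X.w, X.f)) with hb_def
    set Z := Zbp X lam X.B with hZ_def
    set Z' := Zbp X lam X.B' with hZ'_def
    set S := ∑ j ∈ Finset.Icc 1 q, ci X lam j with hS_def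
    set W := ∑ j ∈ Finset.Icc 1 q, min (eB X lam j) (eB' X lam j) * ci X lam j with hW_def
    have ha : 0 < a := ci_pos X hlam0 X.hBs.1 X.hBs.2
    have hb : 0 < b := ci_pos X hlam0 X.hB's.1 X.hB's.2
    have hZ : 0 < Z := Zbp_pos hlam0 hq1 _
    have hZ' : 0 < Z' := Zbp_pos hlam0 hq1 _
    have hq3 : 3 * (1 - lam) ≤ (q : ℝ) := by linarith
    have hSa : ((q : ℝ) - 3 * (1 - lam)) * a ≤ S :=
      sum_ci_ge X hlam0 hlam1 hq3 X.hBs.1 X.hBs.2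
    have hSb : ((q : ℝ) - 3 * (1 - lam)) * b ≤ S :=
      sum_ci_ge X hlam0 hlam1 hq3 X.hB's.1 X.hB's.2
    have hSZ : S - Z = (1 - lam) * a := S_sub_ZB X lam hi0
    have hSZ' : S - Z' = (1 - lam) * b := S_sub_ZB' X lam hi1
    have hSW : S - W = (1 - lam) * a + (1 - lam) * b := S_sub_W X lam hlam1 hi0 hi1 hC
    have hDD : DD X lam = 1 - ∑ j ∈ Finset.Icc 1 q, mmin X lam j := by
      unfold DD
      rw [Finset.sum_sub_distrib, sum_pB hlam0 hq1]
    rcases le_total Z Z' with hZZ | hZZ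
    · -- Zm = Z'
      have hmm : ∀ j ∈ Finset.Icc 1 q,
          min (eB X lam j) (eB' X lam j) * ci X lam j / Z' ≤ mmin X lam j := by
        intro j hj
        refine le_min ?_ ?_
        · exact div_le_div₀ (mul_nonneg (eB_nonneg hlam0 j) (ci_nonneg X hlam0 j))
            (mul_le_mul_of_nonneg_right (min_le_left _ _) (ci_nonneg X hlam0 j)) hZ hZZ
        · exact div_le_div₀ (mul_nonneg (eB'_nonneg hlam0 j) (ci_nonneg X hlam0 j))
            (mul_le_mul_of_nonneg_right (min_le_right _ _) (ci_nonneg X hlam0 j)) hZ' le_rfl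
      have hWsum : W / Z' ≤ ∑ j ∈ Finset.Icc 1 q, mmin X lam j := by
        rw [hW_def, Finset.sum_div]
        exact Finset.sum_le_sum hmm
      have hDDle : DD X lam ≤ (Z' - W) / Z' := by
        rw [hDD, sub_div, div_self hZ'.ne']
        linarith
      have hZ'W : Z' - W = (1 - lam) * a := by linarith
      have hdiff : 0 ≤ (1 - lam) * a - (1 - lam) * b := by linarith
      have hZ'ge : ((q : ℝ) - 4 * (1 - lam)) * a ≤ Z' := by nlinarith [hSa, hdiff]
      calc DD X lam ≤ (Z' - W) / Z' := hDDle
        _ = (1 - lam) * a / Z' := by rw [hZ'W]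
        _ ≤ (1 - lam) / ((q : ℝ) - 4 * (1 - lam)) := by
            rw [div_le_div_iff₀ hZ' hden]
            nlinarith [mul_le_mul_of_nonneg_left hZ'ge (sub_nonneg.2 hlam1)]
    · -- Zm = Z
      have hmm : ∀ j ∈ Finset.Icc 1 q,
          min (eB X lam j) (eB' X lam j) * ci X lam j / Z ≤ mmin X lam j := by
        intro j hj
        refine le_min ?_ ?_
        · exact div_le_div₀ (mul_nonneg (eB_nonneg hlam0 j) (ci_nonneg X hlam0 j))
            (mul_le_mul_of_nonneg_right (min_le_left _ _) (ci_nonneg X hlam0 j)) hZ le_rfl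
        · exact div_le_div₀ (mul_nonneg (eB'_nonneg hlam0 j) (ci_nonneg X hlam0 j))
            (mul_le_mul_of_nonneg_right (min_le_right _ _) (ci_nonneg X hlam0 j)) hZ' hZZ
      have hWsum : W / Z ≤ ∑ j ∈ Finset.Icc 1 q, mmin X lam j := by
        rw [hW_def, Finset.sum_div]
        exact Finset.sum_le_sum hmm
      have hDDle : DD X lam ≤ (Z - W) / Z := by
        rw [hDD, sub_div, div_self hZ.ne']
        linarith
      have hZW : Z - W = (1 - lam) * b := by linarith
      have hdiff : 0 ≤ (1 - lam) * b - (1 - lam) * a := by linarith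
      have hZge : ((q : ℝ) - 4 * (1 - lam)) * b ≤ Z := by nlinarith [hSb, hdiff]
      calc DD X lam ≤ (Z - W) / Z := hDDle
        _ = (1 - lam) * b / Z := by rw [hZW]
        _ ≤ (1 - lam) / ((q : ℝ) - 4 * (1 - lam)) := by
            rw [div_le_div_iff₀ hZ hden]
            nlinarith [mul_le_mul_of_nonneg_left hZge (sub_nonneg.2 hlam1)]

end Work7

end PottsBP

open PottsBP in
/-- Let `q ≥ 5` and let `λ ∈ (0,1]` satisfy `λ > 1 − q/7`. Then every boundary pair
`X` satisfies `ν(X) ≤ (1−λ)/(q − 4(1−λ)) < 1/3`. -/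
theorem nu_lt_third (q : ℕ) (hq : 5 ≤ q) (lam : ℝ)
    (hlam0 : 0 < lam) (hlam1 : lam ≤ 1) (hlam : 1 - (q : ℝ) / 7 < lam)
    (X : BoundaryPair q) :
    nu X lam ≤ (1 - lam) / ((q : ℝ) - 4 * (1 - lam)) ∧
      (1 - lam) / ((q : ℝ) - 4 * (1 - lam)) < 1 / 3 := by
  have hq1 : 1 ≤ q := by omega
  have hqR : (5 : ℝ) ≤ (q : ℝ) := by exact_mod_cast hq
  have hden : 0 < (q : ℝ) - 4 * (1 - lam) := by linarith
  constructor
  · exact le_trans (nu_le_DD hlam0 hq1) (DD_le_bound hq hlam0 hlam1 hlam)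
  · rw [div_lt_div_iff₀ hden (by norm_num : (0:ℝ) < 3)]
    linarith
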